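/- Let s ∈ ℂ with 2s ∉ ℤ, let 0 ≤ ℓ ≤ n, and let λ, μ ∈ Λ_{s^ℓ}(n). Then the following are equivalent: (a) there exist w ∈ S_n, complex numbers k_j, and finitely many pairwise orthogonal roots α_j ∈ Φ with (λ, ᾱ_j) = 0 for all j, such that μ = w(λ − Σ_j k_j α_j); (b) wt(λ) = wt(μ). -/

import Mathlib

open Finset

noncomputable section

/-- The `i`-th standard basis vector of `ℂ^n`. -/
def eps (n : ℕ) (i : Fin n) : Fin n → ℂ := fun t => if t = i then 1 else 0

/-- The standard symmetric bilinear form on `ℂ^n`. -/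
def pform {n : ℕ} (x y : Fin n → ℂ) : ℂ := ∑ i, x i * y i

/-- Membership in `Λ_{s^ℓ}(n)` (indices written `0`-based: the first `ℓ` coordinates are
congruent to `s` mod `ℤ`, the remaining ones to `-s`). -/
def InLambda (n ℓ : ℕ) (s : ℂ) (lam : Fin n → ℂ) : Prop :=
  ∀ i : Fin n, (i.val < ℓ → ∃ m : ℤ, lam i - s = (m : ℂ)) ∧
    (ℓ ≤ i.val → ∃ m : ℤ, lam i + s = (m : ℂ))

open scoped Classical in
/-- The weight function `wt(λ) : ℤ → ℤ` of `λ ∈ Λ_{s^ℓ}(n)`: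
`wt(λ) = ∑_{i ≤ ℓ} δ_{λ_i - s} - ∑_{i > ℓ} δ_{-λ_i - s}`. -/
def wtFn (n ℓ : ℕ) (s : ℂ) (lam : Fin n → ℂ) : ℤ → ℤ := fun a =>
  (∑ i ∈ Finset.univ.filter (fun i : Fin n => i.val < ℓ),
      if lam i - s = (a : ℂ) then 1 else 0)
  - ∑ i ∈ Finset.univ.filter (fun i : Fin n => ℓ ≤ i.val),
      if -lam i - s = (a : ℂ) then 1 else 0


/-!
For `λ ∈ Λ_{s^ℓ}(n)` and `2s ∉ ℤ`, the index `i` lies in the first block exactly when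
`λ_i ∈ s + ℤ`, so `wt(λ)(z)` is the number of coordinates of `λ` equal to `z + s` minus the number
equal to `-(z + s)`: a signed count of the multiset of coordinates, blind to pairs `{x, -x}`.

Moving `λ` along pairwise orthogonal roots `ε_i - ε_j` with `λ_i + λ_j = 0` replaces disjoint
pairs of coordinates `{x, -x}` by other pairs `{y, -y}`, and permuting coordinates does not change
the multiset, so (a) implies (b). Conversely, cancelling as many pairs `{x, -x}` as possible leaves
a multiset determined by the signed count. So under (b), up to permutations, `λ = (p, -p, κ)` and
`μ = (q, -q, κ)` with the same `κ`, and shifting by `p_t - q_t` along the root joining the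
positions of `p_t` and `-p_t` turns the first into the second.
-/

section UnivMap

variable {α β γ : Type*}

lemma Multiset.exists_fin_univ_map_eq (M : Multiset α) :
    ∃ v : Fin M.card → α, univ.val.map v = M := by
  refine ⟨fun i => M.toList.get (i.cast M.length_toList.symm), ?_⟩
  rw [Fin.univ_val_map]
  conv_rhs => rw [← M.coe_toList]
  congr 1
  apply List.ext_get <;> simp

variable [Fintype α] [Fintype β]

lemma Multiset.map_univ_sumElim (f : α → γ) (g : β → γ) :
    univ.val.map (Sum.elim f g) = univ.val.map f + univ.val.map g :=
  Multiset.map_disjSum _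

lemma Multiset.map_univ_comp_equiv (f : β → γ) (e : α ≃ β) :
    univ.val.map (f ∘ e) = univ.val.map f := by
  rw [← Multiset.map_map, Multiset.map_univ_val_equiv]

lemma Multiset.count_univ_map [DecidableEq γ] (f : α → γ) (c : γ) :
    (univ.val.map f).count c = #{a | f a = c} := by
  rw [Multiset.count_map]
  simp [eq_comm]
  rfl

lemma exists_equiv_comp_eq_of_univ_map_eq [DecidableEq γ] {f : α → γ} {g : β → γ}
    (h : univ.val.map f = univ.val.map g) : ∃ e : α ≃ β, g ∘ e = f := by
  have hfiber : ∀ c, Fintype.card {a // f a = c} = Fintype.card {b // g b = c} := by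
    intro c
    rw [Fintype.card_subtype, Fintype.card_subtype, ← Multiset.count_univ_map,
      ← Multiset.count_univ_map, h]
  exact ⟨Equiv.ofFiberEquiv fun c => Fintype.equivOfCardEq (hfiber c),
    funext (Equiv.ofFiberEquiv_map _)⟩

end UnivMap

section SignedCount

variable {G : Type*} [InvolutiveNeg G]

lemma Multiset.filter_add_map_neg_filter_map_neg (P : G → Prop) [DecidablePred P]
    {M : Multiset G} (hM : ∀ x ∈ M, P x ↔ ¬ P (-x)) :
    M.filter P + ((M.map Neg.neg).filter P).map Neg.neg = M := by
  rw [Multiset.filter_map, Multiset.map_map, Function.comp_def]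
  simp only [neg_neg, Multiset.map_id']
  conv_rhs => rw [← Multiset.filter_add_not P M]
  congr 1
  exact Multiset.filter_congr fun x hx => by simp [hM x hx]

variable [DecidableEq G]

lemma Multiset.count_map_neg (M : Multiset G) (x : G) :
    (M.map Neg.neg).count x = M.count (-x) := by
  simpa using M.count_map_eq_count' Neg.neg neg_injective (-x)

def signedCount (M : Multiset G) (x : G) : ℤ := M.count x - M.count (-x)

lemma signedCount_add (M M' : Multiset G) (x : G) :
    signedCount (M + M') x = signedCount M x + signedCount M' x := by
  simp only [signedCount, Multiset.count_add]
  push_cast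
  ring

lemma signedCount_add_map_neg_self (Q : Multiset G) (x : G) :
    signedCount (Q + Q.map Neg.neg) x = 0 := by
  simp only [signedCount, Multiset.count_add, Multiset.count_map_neg, neg_neg]
  push_cast
  ring

lemma Multiset.exists_eq_pairs_add_of_signedCount_eq (P : G → Prop) [DecidablePred P]
    {M M' : Multiset G} (hM : ∀ x ∈ M, P x ↔ ¬ P (-x)) (hM' : ∀ x ∈ M', P x ↔ ¬ P (-x))
    (hcard : M.card = M'.card) (h : ∀ x, P x → signedCount M x = signedCount M' x) :
    ∃ K Q Q' : Multiset G, Q.card = Q'.card ∧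
      M = Q + Q.map Neg.neg + K ∧ M' = Q' + Q'.map Neg.neg + K := by
  set A := M.filter P
  set B := (M.map Neg.neg).filter P
  set A' := M'.filter P
  set B' := (M'.map Neg.neg).filter P
  have hAB : A + B' = A' + B := by
    ext x
    simp only [A, B, A', B', Multiset.count_add, Multiset.count_filter, Multiset.count_map_neg]
    split_ifs with hx
    · have := h x hx
      simp only [signedCount] at this
      omega
    · rfl
  have hBA : B + A' = B' + A := by rw [add_comm, ← hAB, add_comm]
  -- `A ∩ B` are the cancelling pairs, `A - B` and `B - A` what is left
  have hdecomp : ∀ {A B : Multiset G}, A + B.map Neg.neg =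
      A ∩ B + (A ∩ B).map Neg.neg + ((A - B) + (B - A).map Neg.neg) := by
    intro A B
    calc A + B.map Neg.neg = (A - B + A ∩ B) + (B - A + B ∩ A).map Neg.neg := by
          rw [Multiset.sub_add_inter, Multiset.sub_add_inter]
      _ = _ := by rw [Multiset.inter_comm B A, Multiset.map_add]; ac_rfl
  have hMeq : M = A ∩ B + (A ∩ B).map Neg.neg + ((A - B) + (B - A).map Neg.neg) := by
    rw [← hdecomp, Multiset.filter_add_map_neg_filter_map_neg P hM]
  have hM'eq : M' = A' ∩ B' + (A' ∩ B').map Neg.neg + ((A - B) + (B - A).map Neg.neg) := by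
    rw [tsub_eq_tsub_of_add_eq_add hAB, tsub_eq_tsub_of_add_eq_add hBA, ← hdecomp,
      Multiset.filter_add_map_neg_filter_map_neg P hM']
  refine ⟨_, _, _, ?_, hMeq, hM'eq⟩
  rw [hMeq, hM'eq] at hcard
  simp only [Multiset.card_add, Multiset.card_map] at hcard
  omega

end SignedCount

section PairForm

variable {G Q R : Type*}

def pairForm [Neg G] (p : Q → G) (κ : R → G) : (Q ⊕ Q) ⊕ R → G :=
  Sum.elim (Sum.elim p (-p)) κ

lemma eq_pairForm [InvolutiveNeg G] (f : (Q ⊕ Q) ⊕ R → G)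
    (hf : ∀ t, f (.inl (.inr t)) = -f (.inl (.inl t))) :
    f = pairForm (fun t => f (.inl (.inl t))) (fun r => f (.inr r)) := by
  funext x
  rcases x with (t | t) | r <;> simp [pairForm, hf]

lemma pairForm_sub_pairForm_zero [AddCommGroup G] (p c : Q → G) (κ : R → G) :
    pairForm p κ - pairForm c 0 = pairForm (p - c) κ := by
  funext x
  rcases x with (t | t) | r <;> simp [pairForm]; abel

lemma univ_map_pairForm [InvolutiveNeg G] [Fintype Q] [Fintype R] (p : Q → G) (κ : R → G) :
    univ.val.map (pairForm p κ) =
      univ.val.map p + (univ.val.map p).map Neg.neg + univ.val.map κ := by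
  rw [pairForm, Multiset.map_univ_sumElim, Multiset.map_univ_sumElim, Multiset.map_map]
  rfl

lemma signedCount_univ_map_pairForm [InvolutiveNeg G] [DecidableEq G] [Fintype Q] [Fintype R]
    (p : Q → G) (κ : R → G) (x : G) :
    signedCount (univ.val.map (pairForm p κ)) x = signedCount (univ.val.map κ) x := by
  rw [univ_map_pairForm, signedCount_add, signedCount_add_map_neg_self, zero_add]

end PairForm

lemma exists_equiv_pairForm_of_signedCount_eq {G ι : Type*} [InvolutiveNeg G] [DecidableEq G]
    [Fintype ι] (P : G → Prop) [DecidablePred P] {f g : ι → G}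
    (hf : ∀ i, P (f i) ↔ ¬ P (-f i)) (hg : ∀ i, P (g i) ↔ ¬ P (-g i))
    (h : ∀ x, P x → signedCount (univ.val.map f) x = signedCount (univ.val.map g) x) :
    ∃ (N k : ℕ) (p q : Fin N → G) (κ : Fin k → G) (φ ψ : (Fin N ⊕ Fin N) ⊕ Fin k ≃ ι),
      f ∘ φ = pairForm p κ ∧ g ∘ ψ = pairForm q κ := by
  have hmem : ∀ {f : ι → G}, (∀ i, P (f i) ↔ ¬ P (-f i)) →
      ∀ x ∈ univ.val.map f, P x ↔ ¬ P (-x) := by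
    intro f hf x hx
    obtain ⟨i, -, rfl⟩ := Multiset.mem_map.1 hx
    exact hf i
  obtain ⟨K, Q, Q', hcard, hM, hM'⟩ := Multiset.exists_eq_pairs_add_of_signedCount_eq P
    (hmem hf) (hmem hg) (by simp) h
  obtain ⟨p, hp⟩ := Q.exists_fin_univ_map_eq
  obtain ⟨q, hq⟩ : ∃ q : Fin Q.card → G, univ.val.map q = Q' := by
    rw [hcard]; exact Q'.exists_fin_univ_map_eq
  obtain ⟨κ, hκ⟩ := K.exists_fin_univ_map_eq
  obtain ⟨φ, hφ⟩ := exists_equiv_comp_eq_of_univ_map_eq (f := pairForm p κ) (g := f)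
    (by rw [univ_map_pairForm, hp, hκ, hM])
  obtain ⟨ψ, hψ⟩ := exists_equiv_comp_eq_of_univ_map_eq (f := pairForm q κ) (g := g)
    (by rw [univ_map_pairForm, hq, hκ, hM'])
  exact ⟨_, _, p, q, κ, φ, ψ, hφ, hψ⟩

section Roots

variable {n : ℕ}

lemma pform_eps_add (f : Fin n → ℂ) (i j : Fin n) : pform f (eps n i + eps n j) = f i + f j := by
  simp [pform, eps, mul_add, Finset.sum_add_distrib]

lemma pform_eps_sub_eps_eq_zero_iff {i j k l : Fin n} (hij : i ≠ j) (hkl : k ≠ l) :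
    pform (eps n i - eps n j) (eps n k - eps n l) = 0 ↔ i ≠ k ∧ i ≠ l ∧ j ≠ k ∧ j ≠ l := by
  have hexpand : pform (eps n i - eps n j) (eps n k - eps n l) =
      (if i = k then 1 else 0) - (if i = l then 1 else 0) - (if j = k then 1 else 0)
        + (if j = l then 1 else 0) := by
    simp [pform, eps, mul_sub, Finset.sum_sub_distrib, eq_comm]
    ring
  rw [hexpand]
  grind

lemma injective_sumElim_iff_pform_eq_zero {N : ℕ} {a b : Fin N → Fin n} :
    Function.Injective (Sum.elim a b) ↔ (∀ t, a t ≠ b t) ∧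
      ∀ t t', t ≠ t' → pform (eps n (a t) - eps n (b t)) (eps n (a t') - eps n (b t')) = 0 := by
  rw [Sum.elim_injective]
  constructor
  · rintro ⟨ha, hb, hab⟩
    exact ⟨fun t => hab t t, fun t t' htt' => (pform_eps_sub_eps_eq_zero_iff (hab t t)
      (hab t' t')).2 ⟨ha.ne htt', hab t t', fun h => hab t' t h.symm, hb.ne htt'⟩⟩
  · rintro ⟨hab, horth⟩
    have hdisj t t' (htt' : t ≠ t') :=
      (pform_eps_sub_eps_eq_zero_iff (hab t) (hab t')).1 (horth t t' htt')
    refine ⟨fun t t' h => ?_, fun t t' h => ?_, fun t t' => ?_⟩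
    · by_contra htt'
      exact (hdisj t t' htt').1 h
    · by_contra htt'
      exact (hdisj t t' htt').2.2.2 h
    · obtain rfl | htt' := eq_or_ne t t'
      · exact hab t
      · exact (hdisj t t' htt').2.1

lemma sum_smul_eps_sub_eps_comp_equiv {Q R : Type*} [Fintype Q] (φ : (Q ⊕ Q) ⊕ R ≃ Fin n)
    (c : Q → ℂ) :
    (∑ t, c t • (eps n (φ (.inl (.inl t))) - eps n (φ (.inl (.inr t))))) ∘ φ = pairForm c 0 := by
  classical
  funext x
  rcases x with (t | t) | r <;> simp [eps, pairForm, Finset.sum_apply]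

end Roots

lemma signedCount_univ_map_sub_sum_smul {n N : ℕ} (lam : Fin n → ℂ) {a b : Fin N → Fin n}
    (c : Fin N → ℂ) (hinj : Function.Injective (Sum.elim a b))
    (hzero : ∀ t, lam (a t) + lam (b t) = 0) (x : ℂ) :
    signedCount (univ.val.map (lam - ∑ t, c t • (eps n (a t) - eps n (b t)))) x =
      signedCount (univ.val.map lam) x := by
  -- complete the pairs to a decomposition of all indices
  let φ : (Fin N ⊕ Fin N) ⊕ {i // i ∉ Set.range (Sum.elim a b)} ≃ Fin n :=
    (Equiv.sumCongr (Equiv.ofInjective _ hinj) (Equiv.refl _)).trans (Equiv.sumCompl _)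
  have hlam : lam ∘ φ = pairForm (lam ∘ a) (lam ∘ φ ∘ Sum.inr) :=
    eq_pairForm _ fun t => eq_neg_of_add_eq_zero_right (hzero t)
  have hsum : (∑ t, c t • (eps n (a t) - eps n (b t))) ∘ φ = pairForm c 0 :=
    sum_smul_eps_sub_eps_comp_equiv φ c
  rw [← Multiset.map_univ_comp_equiv _ φ, ← Multiset.map_univ_comp_equiv lam φ, Pi.sub_comp,
    hlam, hsum, pairForm_sub_pairForm_zero, signedCount_univ_map_pairForm,
    signedCount_univ_map_pairForm]

namespace InLambda

variable {n ℓ : ℕ} {s : ℂ} {lam : Fin n → ℂ}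

lemma exists_eq_intCast_add_iff (hs : ∀ m : ℤ, 2 * s ≠ (m : ℂ)) (h : InLambda n ℓ s lam)
    (i : Fin n) : (∃ m : ℤ, lam i = m + s) ↔ i.val < ℓ := by
  refine ⟨fun ⟨m, hm⟩ => ?_, fun hi => ?_⟩
  · by_contra hi
    obtain ⟨m', hm'⟩ := (h i).2 (not_lt.1 hi)
    exact hs (m' - m) (by push_cast; linear_combination hm' - hm)
  · obtain ⟨m, hm⟩ := (h i).1 hi
    exact ⟨m, by linear_combination hm⟩

lemma exists_neg_eq_intCast_add_iff (hs : ∀ m : ℤ, 2 * s ≠ (m : ℂ)) (h : InLambda n ℓ s lam)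
    (i : Fin n) : (∃ m : ℤ, -lam i = m + s) ↔ ℓ ≤ i.val := by
  refine ⟨fun ⟨m, hm⟩ => ?_, fun hi => ?_⟩
  · by_contra hi
    obtain ⟨m', hm'⟩ := (h i).1 (not_le.1 hi)
    exact hs (-(m + m')) (by push_cast; linear_combination -hm - hm')
  · obtain ⟨m, hm⟩ := (h i).2 hi
    exact ⟨-m, by push_cast; linear_combination -hm⟩

lemma exists_eq_intCast_add_iff_not (hs : ∀ m : ℤ, 2 * s ≠ (m : ℂ))
    (h : InLambda n ℓ s lam) (i : Fin n) :
    (∃ m : ℤ, lam i = m + s) ↔ ¬ ∃ m : ℤ, -lam i = m + s := by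
  rw [h.exists_eq_intCast_add_iff hs, h.exists_neg_eq_intCast_add_iff hs, not_le]

lemma wtFn_eq_signedCount (hs : ∀ m : ℤ, 2 * s ≠ (m : ℂ)) (h : InLambda n ℓ s lam) (z : ℤ) :
    wtFn n ℓ s lam z = signedCount (univ.val.map lam) (z + s) := by
  have hplus : ∀ i, (i.val < ℓ ∧ lam i - s = z) ↔ lam i = z + s := fun i =>
    ⟨fun hi => by linear_combination hi.2,
      fun hi => ⟨(h.exists_eq_intCast_add_iff hs i).1 ⟨z, hi⟩, by rw [hi]; ring⟩⟩
  have hminus : ∀ i, (ℓ ≤ i.val ∧ -lam i - s = z) ↔ lam i = -(z + s) := fun i =>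
    ⟨fun hi => by linear_combination -hi.2,
      fun hi => ⟨(h.exists_neg_eq_intCast_add_iff hs i).1 ⟨z, by rw [hi, neg_neg]⟩,
        by rw [hi]; ring⟩⟩
  rw [wtFn, signedCount, Multiset.count_univ_map, Multiset.count_univ_map,
    Finset.natCast_card_filter, Finset.natCast_card_filter, Finset.sum_filter, Finset.sum_filter]
  simp only [← ite_and, hplus, hminus]

end InLambda

lemma exists_root_shift_of_comp_eq_pairForm {n N k : ℕ} {lam mu : Fin n → ℂ}
    {p q : Fin N → ℂ} {κ : Fin k → ℂ} {φ ψ : (Fin N ⊕ Fin N) ⊕ Fin k ≃ Fin n}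
    (hφ : lam ∘ φ = pairForm p κ) (hψ : mu ∘ ψ = pairForm q κ) :
    ∃ (w : Equiv.Perm (Fin n)) (N : ℕ) (a b : Fin N → Fin n) (c : Fin N → ℂ),
      (∀ t, a t ≠ b t) ∧
      (∀ t t', t ≠ t' → pform (eps n (a t) - eps n (b t)) (eps n (a t') - eps n (b t')) = 0) ∧
      (∀ t, pform lam (eps n (a t) + eps n (b t)) = 0) ∧
      mu = (lam - ∑ t, c t • (eps n (a t) - eps n (b t))) ∘ w := by
  have hinj : Function.Injective
      (Sum.elim (fun t => φ (.inl (.inl t))) (fun t => φ (.inl (.inr t)))) := by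
    convert φ.injective.comp Sum.inl_injective using 1
    funext x
    rcases x with t | t <;> rfl
  obtain ⟨hab, horth⟩ := injective_sumElim_iff_pform_eq_zero.1 hinj
  have hshift : (lam - ∑ t, (p - q) t • (eps n (φ (.inl (.inl t))) - eps n (φ (.inl (.inr t)))))
      ∘ φ = mu ∘ ψ := by
    rw [Pi.sub_comp, hφ, sum_smul_eps_sub_eps_comp_equiv, pairForm_sub_pairForm_zero,
      sub_sub_cancel, hψ]
  refine ⟨ψ.symm.trans φ, N, _, _, p - q, hab, horth, fun t => ?_, ?_⟩
  · rw [pform_eps_add, ← Function.comp_apply (f := lam), ← Function.comp_apply (f := lam), hφ]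
    simp [pairForm]
  · funext i
    simpa using (congrFun hshift (ψ.symm i)).symm

theorem stmt3_general {n ℓ : ℕ} (s : ℂ) (hs : ∀ m : ℤ, 2 * s ≠ (m : ℂ))
    (lam mu : Fin n → ℂ) (h1 : InLambda n ℓ s lam) (h2 : InLambda n ℓ s mu) :
    (∃ (w : Equiv.Perm (Fin n)) (N : ℕ) (a b : Fin N → Fin n) (c : Fin N → ℂ),
        (∀ t, a t ≠ b t) ∧
        (∀ t t', t ≠ t' →
          pform (eps n (a t) - eps n (b t)) (eps n (a t') - eps n (b t')) = 0) ∧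
        (∀ t, pform lam (eps n (a t) + eps n (b t)) = 0) ∧
        mu = (lam - ∑ t, c t • (eps n (a t) - eps n (b t))) ∘ w)
    ↔ wtFn n ℓ s lam = wtFn n ℓ s mu := by
  classical
  have hwt : wtFn n ℓ s lam = wtFn n ℓ s mu ↔ ∀ z : ℤ,
      signedCount (univ.val.map lam) (z + s) = signedCount (univ.val.map mu) (z + s) := by
    simp only [funext_iff, h1.wtFn_eq_signedCount hs, h2.wtFn_eq_signedCount hs]
  rw [hwt]
  constructor
  · rintro ⟨w, N, a, b, c, hab, horth, hperp, rfl⟩ z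
    rw [Multiset.map_univ_comp_equiv, signedCount_univ_map_sub_sum_smul lam c
      (injective_sumElim_iff_pform_eq_zero.2 ⟨hab, horth⟩) fun t => by
        rw [← pform_eps_add]; exact hperp t]
  · intro h
    obtain ⟨N, k, p, q, κ, φ, ψ, hφ, hψ⟩ :=
      exists_equiv_pairForm_of_signedCount_eq (fun x => ∃ m : ℤ, x = m + s)
        (h1.exists_eq_intCast_add_iff_not hs) (h2.exists_eq_intCast_add_iff_not hs)
        (by rintro x ⟨m, rfl⟩; exact h m)
    exact exists_root_shift_of_comp_eq_pairForm hφ hψ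

/-- For `2s ∉ ℤ` and `λ, μ ∈ Λ_{s^ℓ}(n)`, the condition
`μ = w(λ - ∑_j k_j α_j)` for some `w ∈ S_n`, complex `k_j` and pairwise orthogonal roots
`α_j` with `(λ, ᾱ_j) = 0`, is equivalent to `wt(λ) = wt(μ)`. -/
theorem stmt3 {n ℓ : ℕ} (hl : ℓ ≤ n) (s : ℂ) (hs : ∀ m : ℤ, 2 * s ≠ (m : ℂ))
    (lam mu : Fin n → ℂ) (h1 : InLambda n ℓ s lam) (h2 : InLambda n ℓ s mu) :
    (∃ (w : Equiv.Perm (Fin n)) (N : ℕ) (a b : Fin N → Fin n) (c : Fin N → ℂ),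
        (∀ t, a t ≠ b t) ∧
        (∀ t t', t ≠ t' →
          pform (eps n (a t) - eps n (b t)) (eps n (a t') - eps n (b t')) = 0) ∧
        (∀ t, pform lam (eps n (a t) + eps n (b t)) = 0) ∧
        mu = (lam - ∑ t, c t • (eps n (a t) - eps n (b t))) ∘ w)
    ↔ wtFn n ℓ s lam = wtFn n ℓ s mu :=
  stmt3_general s hs lam mu h1 h2
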